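/- Let 1 < q < 2, 0 < r < 1/q − 1/2, ε > 0 and R > 0 with R ε^{−1} ≥ max(e², u²), where u := 1/r − q(1 + 1/(2r)) > 0. Set M = ε√(u ln(R ε^{−1})), p = 2^J with J = ⌊((2−q)/(2r)) log₂(R/M)⌋, and d = 2^K with K = ⌊q log₂(R/M)⌋. Then M is well defined with R/M ≥ e, d ≤ p, and the hypercube Θ(p,d,M) := { ∑_{j=1}^p θ_j φ_j : θ_j ∈ [0,M] for all j, exactly d of the θ_j are nonzero } is contained in L_q(R) ∩ B^r_{2,∞}(R). -/

import Mathlib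

open MeasureTheory Real

noncomputable section

/-- Membership in the strong `L_q(R)` ball, in terms of the coefficients on the
orthonormal basis `φ`. -/
def inLq {H : Type*} [NormedAddCommGroup H] [InnerProductSpace ℝ H]
    (φ : ℕ → H) (q R : ℝ) (g : H) : Prop :=
  Summable (fun j => |(inner ℝ (φ j) g : ℝ)| ^ q) ∧
    ∑' j : ℕ, |(inner ℝ (φ j) g : ℝ)| ^ q ≤ R ^ q

/-- Membership in the Besov ball `B^r_{2,∞}(R)`, in terms of the coefficients on the
orthonormal basis `φ` (here `φ j` stands for `φ_{j+1}`, `j ∈ ℕ`). -/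
def inBesov {H : Type*} [NormedAddCommGroup H] [InnerProductSpace ℝ H]
    (φ : ℕ → H) (r R : ℝ) (g : H) : Prop :=
  ∀ J : ℕ, ((J : ℝ) + 1) ^ (2 * r) *
      (∑' j : ℕ, if J ≤ j then (inner ℝ (φ j) g : ℝ) ^ 2 else 0) ≤ R ^ 2

/-!
A point of `Θ(p,d,M)` has its coefficients in `[0,M]`, all supported in the first `p` indices,
with `d` of them nonzero; hence `∑ |θ_j|^q ≤ d M^q`, and every Besov tail is at most `d M²` and
vanishes from index `p` on. Both memberships thus reduce to `d ≤ (R/M)^q` and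
`p ≤ (R/M)^((2-q)/(2r))`, which is what the floors in `J` and `K` give, together with
`q ≤ (2-q)/(2r)` (equivalent to `r < 1/q - 1/2`) for `d ≤ p`. Finally `R/M ≥ e` because, with
`x = R/ε`, both `log x` and `u ≤ √x` are at most `x/e`.
-/

lemma Real.log_le_div_exp_one {x : ℝ} (hx : 0 < x) : log x ≤ x / exp 1 := by
  have h := log_le_sub_one_of_pos (div_pos hx (exp_pos 1))
  rw [log_div hx.ne' (exp_pos 1).ne', log_exp] at h
  linarith

lemma Real.sqrt_le_div_exp_one {x : ℝ} (hx : exp 2 ≤ x) : √x ≤ x / exp 1 := by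
  have he : exp 1 ≤ √x := by
    rw [le_sqrt (exp_pos 1).le (le_trans (exp_pos 2).le hx), ← exp_nat_mul]
    norm_num [hx]
  rw [le_div_iff₀ (exp_pos 1)]
  calc √x * exp 1 ≤ √x * √x := by gcongr
    _ = x := mul_self_sqrt (le_trans (exp_pos 2).le hx)

lemma mul_sqrt_mul_log_le_div_exp_one {ε R u : ℝ} (hε : 0 < ε) (hu : 0 ≤ u)
    (hRe : exp 2 ≤ R / ε) (hRu : u ^ 2 ≤ R / ε) :
    ε * √(u * log (R / ε)) ≤ R / exp 1 := by
  set x := R / ε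
  have hx : 0 < x := lt_of_lt_of_le (exp_pos 2) hRe
  have hux : u ≤ x / exp 1 := ((le_sqrt hu hx.le).2 hRu).trans (sqrt_le_div_exp_one hRe)
  have hlog : u * log x ≤ (x / exp 1) ^ 2 := by
    rw [sq]
    exact mul_le_mul hux (log_le_div_exp_one hx) (log_nonneg (by
      linarith [add_one_le_exp 2])) (by positivity)
  calc ε * √(u * log x) ≤ ε * (x / exp 1) := by
        gcongr
        exact sqrt_le_iff.2 ⟨by positivity, hlog⟩
    _ = R / exp 1 := by simp only [x]; field_simp

lemma le_div_two_mul_of_lt_inv_sub_half {q r : ℝ} (hq : 0 < q) (hr : 0 < r)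
    (hrq : r < 1 / q - 1 / 2) : q ≤ (2 - q) / (2 * r) := by
  rw [le_div_iff₀ (by positivity)]
  have h := mul_lt_mul_of_pos_right hrq hq
  rw [show (1 / q - 1 / 2) * q = 1 - q / 2 by field_simp] at h
  linarith

lemma two_pow_floor_mul_logb_le {c y : ℝ} (hc : 0 ≤ c) (hy : 1 ≤ y) :
    ((2 ^ ⌊c * logb 2 y⌋₊ : ℕ) : ℝ) ≤ y ^ c := by
  have hlog : 0 ≤ c * logb 2 y := mul_nonneg hc (logb_nonneg one_lt_two hy)
  calc ((2 ^ ⌊c * logb 2 y⌋₊ : ℕ) : ℝ) = (2 : ℝ) ^ (⌊c * logb 2 y⌋₊ : ℝ) := by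
        rw [rpow_natCast]; push_cast; rfl
    _ ≤ 2 ^ (c * logb 2 y) := rpow_le_rpow_of_exponent_le one_le_two (Nat.floor_le hlog)
    _ = y ^ c := by
        rw [mul_comm, rpow_mul zero_le_two, rpow_logb two_pos (by norm_num) (by linarith)]

lemma mul_rpow_le_rpow_of_le_div_rpow {d q M R : ℝ} (hM : 0 < M) (hR : 0 ≤ R)
    (hd : d ≤ (R / M) ^ q) : d * M ^ q ≤ R ^ q :=
  calc d * M ^ q ≤ (R / M) ^ q * M ^ q := by gcongr
    _ = R ^ q := by rw [← mul_rpow (by positivity) hM.le, div_mul_cancel₀ _ hM.ne']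

lemma rpow_mul_mul_sq_le {p d q r M R : ℝ} (hM : 0 < M) (hR : 0 < R) (hr : 0 < r)
    (hp0 : 0 ≤ p) (hd0 : 0 ≤ d) (hp : p ≤ (R / M) ^ ((2 - q) / (2 * r)))
    (hd : d ≤ (R / M) ^ q) :
    p ^ (2 * r) * (d * M ^ 2) ≤ R ^ 2 := by
  have hRM : 0 < R / M := div_pos hR hM
  have hp' : p ^ (2 * r) ≤ (R / M) ^ (2 - q) :=
    calc p ^ (2 * r) ≤ ((R / M) ^ ((2 - q) / (2 * r))) ^ (2 * r) := by gcongr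
      _ = (R / M) ^ (2 - q) := by
        rw [← rpow_mul hRM.le, div_mul_cancel₀ _ (by positivity)]
  calc p ^ (2 * r) * (d * M ^ 2) ≤ (R / M) ^ (2 - q) * ((R / M) ^ q * M ^ 2) := by
        gcongr
    _ = (R / M) ^ (2 : ℝ) * M ^ 2 := by rw [← mul_assoc, ← rpow_add hRM]; norm_num
    _ = R ^ 2 := by rw [rpow_two]; field_simp

lemma Finset.sum_apply_le_ncard_ne_zero_mul {ι : Type*} [Fintype ι] (θ : ι → ℝ)
    (F : ι → ℝ → ℝ) (hF : ∀ i, F i 0 = 0) {c : ℝ} (hc : ∀ i, θ i ≠ 0 → F i (θ i) ≤ c) :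
    ∑ i, F i (θ i) ≤ {i | θ i ≠ 0}.ncard * c := by
  classical
  calc ∑ i, F i (θ i) = ∑ i ∈ univ.filter (θ · ≠ 0), F i (θ i) := by
        symm
        exact sum_filter_of_ne fun i _ hFi hθi => hFi (by rw [hθi, hF])
    _ ≤ ∑ _i ∈ univ.filter (θ · ≠ 0), c := sum_le_sum fun i hi => hc i (mem_filter.1 hi).2
    _ = {i | θ i ≠ 0}.ncard * c := by
        rw [sum_const, nsmul_eq_mul, ← Set.ncard_coe_finset, coe_filter]
        simp

section Hypercube

variable {H : Type*} [NormedAddCommGroup H] [InnerProductSpace ℝ H] {φ : ℕ → H} {p : ℕ}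

lemma Orthonormal.inner_sum_fin_smul (hφ : Orthonormal ℝ φ) (θ : Fin p → ℝ) (i : ℕ) :
    inner ℝ (φ i) (∑ j : Fin p, θ j • φ j) = if h : i < p then θ ⟨i, h⟩ else 0 := by
  split_ifs with h
  · exact (hφ.comp _ Fin.val_injective).inner_right_fintype θ ⟨i, h⟩
  · rw [inner_sum]
    refine Finset.sum_eq_zero fun j _ => ?_
    rw [inner_smul_right, hφ.2 (by omega : i ≠ j), mul_zero]

lemma Orthonormal.hasSum_apply_inner_sum_fin_smul (hφ : Orthonormal ℝ φ) (θ : Fin p → ℝ)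
    (F : ℕ → ℝ → ℝ) (hF : ∀ i, F i 0 = 0) :
    HasSum (fun i => F i (inner ℝ (φ i) (∑ j : Fin p, θ j • φ j))) (∑ j : Fin p, F j (θ j)) := by
  have hcoef := hφ.inner_sum_fin_smul θ
  have hsum : ∑ j : Fin p, F j (θ j)
      = ∑ i ∈ Finset.range p, F i (inner ℝ (φ i) (∑ j : Fin p, θ j • φ j)) := by
    rw [← Fin.sum_univ_eq_sum_range]
    simp [hcoef]
  rw [hsum]
  refine hasSum_sum_of_ne_finset_zero fun i hi => ?_
  rw [hcoef, dif_neg (by simpa using hi), hF]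

lemma Orthonormal.inLq_sum_fin_smul (hφ : Orthonormal ℝ φ) {q M R : ℝ} (hq : 0 < q)
    {θ : Fin p → ℝ} (hθ : ∀ j, |θ j| ≤ M)
    (hbudget : ({j | θ j ≠ 0}.ncard : ℝ) * M ^ q ≤ R ^ q) :
    inLq φ q R (∑ j : Fin p, θ j • φ j) := by
  have h := hφ.hasSum_apply_inner_sum_fin_smul θ (fun _ x => |x| ^ q)
    fun _ => by rw [abs_zero, zero_rpow hq.ne']
  refine ⟨h.summable, h.tsum_eq ▸ le_trans ?_ hbudget⟩
  exact Finset.sum_apply_le_ncard_ne_zero_mul θ (fun _ x => |x| ^ q)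
    (fun _ => by rw [abs_zero, zero_rpow hq.ne'])
    fun j _ => rpow_le_rpow (abs_nonneg _) (hθ j) hq.le

lemma Orthonormal.inBesov_sum_fin_smul (hφ : Orthonormal ℝ φ) {r M R : ℝ} (hr : 0 ≤ r)
    {θ : Fin p → ℝ} (hθ : ∀ j, |θ j| ≤ M)
    (hbudget : (p : ℝ) ^ (2 * r) * ({j | θ j ≠ 0}.ncard * M ^ 2) ≤ R ^ 2) :
    inBesov φ r R (∑ j : Fin p, θ j • φ j) := by
  intro J
  have h := hφ.hasSum_apply_inner_sum_fin_smul θ (fun i x => if J ≤ i then x ^ 2 else 0)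
    fun _ => by simp
  rw [h.tsum_eq]
  rcases lt_or_ge J p with hJ | hJ
  · have htail : ∑ j : Fin p, (if J ≤ (j : ℕ) then θ j ^ 2 else 0)
        ≤ {j | θ j ≠ 0}.ncard * M ^ 2 := by
      refine Finset.sum_apply_le_ncard_ne_zero_mul θ
        (fun j x => if J ≤ (j : ℕ) then x ^ 2 else 0) (fun _ => by simp) fun j _ => ?_
      split_ifs
      · exact sq_le_sq' (abs_le.1 (hθ j)).1 (abs_le.1 (hθ j)).2
      · exact sq_nonneg M
    refine le_trans ?_ hbudget
    gcongr
    exact_mod_cast hJ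
  · rw [Finset.sum_eq_zero fun j _ => if_neg (by omega), mul_zero]
    positivity

end Hypercube

/-- The hypercube `Θ(p,d,M)` is contained in `L_q(R) ∩ B^r_{2,∞}(R)`. -/
theorem statement_17 :
    ∀ q r ε R : ℝ, 1 < q → q < 2 → 0 < r → r < 1 / q - 1 / 2 → 0 < ε → 0 < R →
    ∀ u : ℝ, u = 1 / r - q * (1 + 1 / (2 * r)) →
    0 < u →
    max (Real.exp 2) (u ^ 2) ≤ R / ε →
    ∀ M : ℝ, M = ε * Real.sqrt (u * Real.log (R / ε)) →
    ∀ p : ℕ, p = 2 ^ (⌊(2 - q) / (2 * r) * Real.logb 2 (R / M)⌋₊) →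
    ∀ dd : ℕ, dd = 2 ^ (⌊q * Real.logb 2 (R / M)⌋₊) →
    0 < M ∧ Real.exp 1 ≤ R / M ∧ dd ≤ p ∧
    ∀ (H : Type) [NormedAddCommGroup H] [InnerProductSpace ℝ H]
      (φ : ℕ → H), Orthonormal ℝ φ →
      (Submodule.span ℝ (Set.range φ)).topologicalClosure = ⊤ →
    ∀ θ : Fin p → ℝ, (∀ j, θ j ∈ Set.Icc (0 : ℝ) M) →
      Set.ncard {j : Fin p | θ j ≠ 0} = dd →
      inLq φ q R (∑ j : Fin p, θ j • φ (j : ℕ)) ∧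
      inBesov φ r R (∑ j : Fin p, θ j • φ (j : ℕ)) := by
  intro q r ε R hq1 _ hr hrq hε hR u _ hu hRε M hM p hp dd hdd
  have hRe : exp 2 ≤ R / ε := le_of_max_le_left hRε
  have hM0 : 0 < M := hM ▸ mul_pos hε (sqrt_pos.2 (mul_pos hu (log_pos
    (lt_of_lt_of_le (one_lt_exp_iff.2 two_pos) hRe))))
  have hRM : exp 1 ≤ R / M := by
    rw [le_div_iff₀ hM0, ← le_div_iff₀' (exp_pos 1), hM]
    exact mul_sqrt_mul_log_le_div_exp_one hε hu.le hRe (le_of_max_le_right hRε)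
  have hRM1 : 1 ≤ R / M := (one_le_exp zero_le_one).trans hRM
  have hqp := le_div_two_mul_of_lt_inv_sub_half (by linarith) hr hrq
  have hdR : (dd : ℝ) ≤ (R / M) ^ q := hdd ▸ two_pow_floor_mul_logb_le (by linarith) hRM1
  have hpR : (p : ℝ) ≤ (R / M) ^ ((2 - q) / (2 * r)) :=
    hp ▸ two_pow_floor_mul_logb_le ((by linarith : 0 ≤ q).trans hqp) hRM1
  refine ⟨hM0, hRM, hp ▸ hdd ▸ Nat.pow_le_pow_right two_pos (Nat.floor_le_floor
    (mul_le_mul_of_nonneg_right hqp (logb_nonneg one_lt_two hRM1))), ?_⟩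
  intro H _ _ φ hφ _ θ hθ hcard
  have hθM : ∀ j, |θ j| ≤ M := fun j => abs_le.2 ⟨by linarith [(hθ j).1], (hθ j).2⟩
  rw [← hcard] at hdR
  exact ⟨hφ.inLq_sum_fin_smul (by linarith) hθM
      (mul_rpow_le_rpow_of_le_div_rpow hM0 hR.le hdR),
    hφ.inBesov_sum_fin_smul hr.le hθM
      (rpow_mul_mul_sq_le hM0 hR hr p.cast_nonneg (Nat.cast_nonneg _) hpR hdR)⟩
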